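/- For every n ≥ 2, every symmetric crosspolytope in ℝ^n (i.e., conv{±w₁, …, ±w_n} for linearly independent vectors w₁, …, w_n ∈ ℝ^n) is SRS-indecomposable. -/

import Mathlib

open MeasureTheory Set
open scoped RealInnerProductSpace

noncomputable section

variable {E : Type*} [NormedAddCommGroup E] [InnerProductSpace ℝ E]

/-- Orthogonal projection `π_v` onto the hyperplane `v^⊥`. -/
def projPerp (v x : E) : E := x - (⟪x, v⟫ / ⟪v, v⟫) • v

/-- The family of sets `K_t = { x + t β(π_v(x)) v : x ∈ K }` underlying an RS-movement
with direction `v` and speed function `β`. -/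
def RSFamily (K : Set E) (v : E) (β : E → ℝ) (t : ℝ) : Set E :=
  (fun x => x + (t * β (projPerp v x)) • v) '' K

/-- A symmetric convex body `K` is SRS-decomposable if there are `ε > 0`, a direction
`v ≠ 0` and a speed function `β` which is odd on `π_v(K)` and is not the restriction of a
linear functional, such that `K_t` is convex for every `t ∈ (-ε, ε)`
(note `K_0 = K` automatically). -/
def IsSRSDecomposable (K : Set E) : Prop :=
  ∃ (v : E) (β : E → ℝ) (ε : ℝ), 0 < ε ∧ v ≠ 0 ∧
    (∀ x ∈ projPerp v '' K, β (-x) = -β x) ∧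
    (∀ t ∈ Set.Ioo (-ε) ε, Convex ℝ (RSFamily K v β t)) ∧
    ¬∃ ℓ : E →ₗ[ℝ] ℝ, ∀ x ∈ projPerp v '' K, β x = ℓ x

/-! ### Auxiliary lemmas -/

/-- `projPerp v` as a linear map. -/
def projPerpL (v : E) : E →ₗ[ℝ] E where
  toFun x := projPerp v x
  map_add' x y := by
    simp only [projPerp, inner_add_left, add_div, add_smul]; abel
  map_smul' c x := by
    simp only [projPerp, inner_smul_left, RingHom.id_apply, smul_sub, smul_smul]
    simp [starRingEnd_apply, mul_div_assoc]

lemma projPerp_eq (v x : E) : projPerp v x = projPerpL v x := rfl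

lemma projPerp_add_smul (v : E) (hv : v ≠ 0) (x : E) (s : ℝ) :
    projPerp v (x + s • v) = projPerp v x := by
  have hvv : ⟪v, v⟫ ≠ 0 := inner_self_ne_zero.2 hv
  simp only [projPerp, inner_add_left, real_inner_smul_left, add_div, add_smul]
  rw [mul_div_assoc, div_self hvv, mul_one]
  abel

lemma projPerp_zero (v : E) : projPerp v (0:E) = 0 := by simp [projPerp]

lemma projPerp_smul_self (v : E) (hv : v ≠ 0) (s : ℝ) : projPerp v (s • v) = 0 := by
  have := projPerp_add_smul v hv 0 s
  simpa [projPerp_zero] using this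

lemma projPerp_neg (v x : E) : projPerp v (-x) = -projPerp v x := by
  rw [projPerp_eq, projPerp_eq, map_neg]

lemma projPerp_sum {k : ℕ} (v : E) (c : Fin k → ℝ) (y : Fin k → E) :
    projPerp v (∑ i, c i • y i) = ∑ i, c i • projPerp v (y i) := by
  simp only [projPerp_eq, map_sum, _root_.map_smul]
/-- Key relation extracted from convexity of the RS family. -/
lemma key_rel {n : ℕ} (w : Fin n → E) (K : Set E)
    (hK : K = convexHull ℝ (Set.range w ∪ -Set.range w))
    (v : E) (hv : v ≠ 0) (β : E → ℝ) (ε' : ℝ) (hε' : 0 < ε')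
    (hconv : ∀ t ∈ Set.Ioo (-ε') ε', Convex ℝ (RSFamily K v β t))
    (ε : Fin n → ℝ) (hε : ∀ i, ε i = 1 ∨ ε i = -1)
    (ν : E) (hν : ∀ j, ⟪ν, w j⟫ = ε j) (hνv : ⟪ν, v⟫ ≠ 0)
    (t : Fin n → ℝ) (ht0 : ∀ i, 0 ≤ t i) (ht1 : ∑ i, t i = 1) :
    β (projPerp v (∑ i, (t i * ε i) • w i)) = ∑ i, t i * β (projPerp v (ε i • w i)) := by
  -- vertices are in K
  have hvert : ∀ i, ε i • w i ∈ K := by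
    intro i
    rw [hK]
    apply subset_convexHull
    rcases hε i with h | h
    · rw [h, one_smul]; exact Or.inl ⟨i, rfl⟩
    · rw [h]
      refine Or.inr ?_
      rw [Set.mem_neg]
      refine ⟨i, ?_⟩
      simp
  -- halfspace bound
  have hHalf : ∀ y ∈ K, ⟪ν, y⟫ ≤ 1 := by
    intro y hy
    rw [hK] at hy
    have hsub : (Set.range w ∪ -Set.range w) ⊆ {y : E | ⟪ν, y⟫ ≤ 1} := by
      rintro z (⟨j, rfl⟩ | hz)
      · rw [Set.mem_setOf_eq, hν j]; rcases hε j with h|h <;> rw [h] <;> norm_num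
      · rw [Set.mem_neg] at hz
        obtain ⟨j, hj⟩ := hz
        have : z = -(w j) := by rw [hj, neg_neg]
        rw [Set.mem_setOf_eq, this, inner_neg_right, hν j]
        rcases hε j with h|h <;> rw [h] <;> norm_num
    have hcvx : Convex ℝ {y : E | ⟪ν, y⟫ ≤ 1} :=
      convex_halfSpace_le ⟨fun a b => inner_add_right _ _ _, fun c a => real_inner_smul_right _ _ _⟩ 1
    exact convexHull_min hsub hcvx hy
  set x' : E := ∑ i, (t i * ε i) • w i with hx'
  set Δ : ℝ := (∑ i, t i * β (projPerp v (ε i • w i))) - β (projPerp v x') with hΔ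
  have hx'ν : ⟪ν, x'⟫ = 1 := by
    rw [hx', inner_sum]
    have : ∀ i, ⟪ν, (t i * ε i) • w i⟫ = t i := by
      intro i
      rw [real_inner_smul_right, hν i]
      rcases hε i with h|h <;> rw [h] <;> ring
    rw [Finset.sum_congr rfl (fun i _ => this i), ht1]
  have main : ∀ τ ∈ Set.Ioo (-ε') ε', τ * Δ * ⟪ν, v⟫ ≤ 0 := by
    intro τ hτ
    have hS := hconv τ hτ
    -- the convex combination of moved vertices lies in the family
    have hmem : (∑ i, t i • ((ε i • w i) + (τ * β (projPerp v (ε i • w i))) • v))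
        ∈ RSFamily K v β τ := by
      apply hS.sum_mem (fun i _ => ht0 i) ht1
      intro i _
      exact Set.mem_image_of_mem _ (hvert i)
    have hsum : (∑ i, t i • ((ε i • w i) + (τ * β (projPerp v (ε i • w i))) • v))
        = x' + (τ * ∑ i, t i * β (projPerp v (ε i • w i))) • v := by
      rw [hx']
      rw [Finset.sum_congr rfl (fun i _ => smul_add (t i) _ _)]
      rw [Finset.sum_add_distrib]
      congr 1
      · exact Finset.sum_congr rfl fun i _ => (smul_smul _ _ _)
      · calc ∑ i, t i • (τ * β (projPerp v (ε i • w i))) • v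
            = ∑ i, (t i * (τ * β (projPerp v (ε i • w i)))) • v := by
              exact Finset.sum_congr rfl fun i _ => (smul_smul _ _ _)
          _ = (∑ i, t i * (τ * β (projPerp v (ε i • w i)))) • v := (Finset.sum_smul).symm
          _ = (τ * ∑ i, t i * β (projPerp v (ε i • w i))) • v := by
              rw [Finset.mul_sum]; congr 1
              exact Finset.sum_congr rfl fun i _ => by ring
    rw [hsum] at hmem
    obtain ⟨c, hcK, hc⟩ := hmem
    simp only at hc
    set T : ℝ := ∑ i, t i * β (projPerp v (ε i • w i)) with hT
    set bc : ℝ := β (projPerp v c) with hbc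
    have hcform : c = x' + (τ * T - τ * bc) • v := by
      have h' : c = x' + (τ * T) • v - (τ * bc) • v := by
        rw [← hc]; abel
      rw [h', sub_smul]; abel
    have hπc : projPerp v c = projPerp v x' := by
      conv_lhs => rw [hcform]
      rw [projPerp_add_smul v hv]
    have hbcx : bc = β (projPerp v x') := by rw [hbc, hπc]
    have hinner : ⟪ν, c⟫ = 1 + (τ * T - τ * bc) * ⟪ν, v⟫ := by
      conv_lhs => rw [hcform]
      rw [inner_add_right, hx'ν, real_inner_smul_right]
    have hle := hHalf c hcK
    rw [hinner] at hle
    have h2 : (τ * T - τ * bc) * ⟪ν, v⟫ ≤ 0 := by linarith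
    calc τ * Δ * ⟪ν, v⟫ = (τ * T - τ * bc) * ⟪ν, v⟫ := by rw [hΔ, hT, hbcx]; ring
    _ ≤ 0 := h2
  have h1 := main (ε'/2) ⟨by linarith, by linarith⟩
  have h2 := main (-(ε'/2)) ⟨by linarith, by linarith⟩
  have hΔ0 : Δ = 0 := by
    have ha : Δ * ⟪ν, v⟫ = 0 := by
      rcases lt_trichotomy (Δ * ⟪ν, v⟫) 0 with h|h|h
      · exfalso; nlinarith [mul_pos (half_pos hε') (neg_pos.2 h)]
      · exact h
      · exfalso; nlinarith [mul_pos (half_pos hε') h]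
    rcases mul_eq_zero.1 ha with h | h
    · exact h
    · exact absurd h hνv
  rw [hΔ] at hΔ0
  linarith [hΔ0]

lemma crossK_char (hn : 0 < n) (w : Fin n → EuclideanSpace ℝ (Fin n))
    (bw : Module.Basis (Fin n) ℝ (EuclideanSpace ℝ (Fin n))) (hbw : ⇑bw = w) :
    convexHull ℝ (Set.range w ∪ -Set.range w)
      = {y : EuclideanSpace ℝ (Fin n) | ∑ i, |bw.repr y i| ≤ 1} := by
  apply Set.Subset.antisymm
  · apply convexHull_min
    · rintro z (⟨j, rfl⟩ | hz)
      · have : bw.repr (w j) = Finsupp.single j 1 := by rw [← hbw]; exact bw.repr_self j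
        simp only [Set.mem_setOf_eq, this]
        have habs : ∀ i, |(Finsupp.single j (1:ℝ)) i| = if j = i then (1:ℝ) else 0 := by
          intro i; rw [Finsupp.single_apply]; split_ifs <;> simp
        rw [Finset.sum_congr rfl fun i _ => habs i, Finset.sum_ite_eq]
        simp
      · rw [Set.mem_neg] at hz
        obtain ⟨j, hj⟩ := hz
        have hz' : z = -(w j) := by rw [hj, neg_neg]
        subst hz'
        have : bw.repr (-(w j)) = -Finsupp.single j 1 := by
          rw [map_neg, ← hbw, bw.repr_self j]
        simp only [Set.mem_setOf_eq, this]
        have habs : ∀ i, |(-Finsupp.single j (1:ℝ)) i| = if j = i then (1:ℝ) else 0 := by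
          intro i; rw [Finsupp.neg_apply, abs_neg, Finsupp.single_apply]; split_ifs <;> simp
        rw [Finset.sum_congr rfl fun i _ => habs i, Finset.sum_ite_eq]
        simp
    · intro y hy z hz a b ha hb hab
      simp only [Set.mem_setOf_eq] at hy hz ⊢
      have hrepr : ∀ i, bw.repr (a • y + b • z) i = a * bw.repr y i + b * bw.repr z i := by
        intro i
        rw [map_add, _root_.map_smul, _root_.map_smul]
        simp [Finsupp.add_apply, Finsupp.smul_apply]
      calc ∑ i, |bw.repr (a • y + b • z) i|
          ≤ ∑ i, (a * |bw.repr y i| + b * |bw.repr z i|) := by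
            apply Finset.sum_le_sum
            intro i _
            rw [hrepr i]
            calc |a * bw.repr y i + b * bw.repr z i|
                ≤ |a * bw.repr y i| + |b * bw.repr z i| := abs_add_le _ _
              _ = a * |bw.repr y i| + b * |bw.repr z i| := by
                  rw [abs_mul, abs_mul, abs_of_nonneg ha, abs_of_nonneg hb]
        _ = a * (∑ i, |bw.repr y i|) + b * (∑ i, |bw.repr z i|) := by
            rw [Finset.sum_add_distrib, Finset.mul_sum, Finset.mul_sum]
        _ ≤ a * 1 + b * 1 := by
            gcongr <;> assumption
        _ = 1 := by rw [mul_one, mul_one, hab]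
  · intro y hy
    simp only [Set.mem_setOf_eq] at hy
    set c : Fin n → ℝ := fun i => bw.repr y i with hc
    have hK0 : (0 : EuclideanSpace ℝ (Fin n)) ∈ convexHull ℝ (Set.range w ∪ -Set.range w) := by
      have i0 : Fin n := ⟨0, hn⟩
      have h1 : w i0 ∈ convexHull ℝ (Set.range w ∪ -Set.range w) :=
        subset_convexHull _ _ (Or.inl ⟨i0, rfl⟩)
      have h2 : -(w i0) ∈ convexHull ℝ (Set.range w ∪ -Set.range w) :=
        subset_convexHull _ _ (Or.inr (by rw [Set.mem_neg]; exact ⟨i0, by simp⟩))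
      have := (convex_convexHull ℝ (Set.range w ∪ -Set.range w)) h1 h2
        (by norm_num : (0:ℝ) ≤ 1/2) (by norm_num : (0:ℝ) ≤ 1/2) (by norm_num)
      simpa using this
    -- convex combination over Option (Fin n)
    set g : Option (Fin n) → ℝ := fun o => o.elim (1 - ∑ i, |c i|) (fun i => |c i|) with hg
    set f : Option (Fin n) → EuclideanSpace ℝ (Fin n) :=
      fun o => o.elim 0 (fun i => (if c i < 0 then (-1:ℝ) else 1) • w i) with hf
    have hg0 : ∀ o ∈ Finset.univ, 0 ≤ g o := by
      rintro (_|i) _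
      · simp only [hg, Option.elim]; linarith
      · simp only [hg, Option.elim]; exact abs_nonneg _
    have hg1 : ∑ o : Option (Fin n), g o = 1 := by
      rw [Fintype.sum_option]
      simp only [hg, Option.elim]
      ring
    have hfmem : ∀ o ∈ Finset.univ,
        f o ∈ convexHull ℝ (Set.range w ∪ -Set.range w) := by
      rintro (_|i) _
      · exact hK0
      · simp only [hf, Option.elim]
        split_ifs with h
        · apply subset_convexHull
          refine Or.inr ?_
          rw [Set.mem_neg]
          exact ⟨i, by simp⟩
        · rw [one_smul]
          exact subset_convexHull _ _ (Or.inl ⟨i, rfl⟩)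
    have hsum : ∑ o : Option (Fin n), g o • f o = y := by
      rw [Fintype.sum_option]
      simp only [hg, hf, Option.elim, smul_zero, zero_add]
      have : ∀ i, |c i| • (if c i < 0 then (-1:ℝ) else 1) • w i = c i • w i := by
        intro i
        rw [smul_smul]
        congr 1
        split_ifs with h
        · rw [abs_of_neg h]; ring
        · rw [abs_of_nonneg (not_lt.1 h)]; ring
      rw [Finset.sum_congr rfl fun i _ => this i]
      calc ∑ i, c i • w i = ∑ i, bw.repr y i • bw i := by
            rw [hc]; exact Finset.sum_congr rfl fun i _ => by rw [hbw]
        _ = y := bw.sum_repr y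
    rw [← hsum]
    exact (convex_convexHull ℝ _).sum_mem hg0 hg1 hfmem

lemma exists_nu (w : Fin n → EuclideanSpace ℝ (Fin n))
    (bw : Module.Basis (Fin n) ℝ (EuclideanSpace ℝ (Fin n))) (hbw : ⇑bw = w)
    (ε : Fin n → ℝ) : ∃ ν : EuclideanSpace ℝ (Fin n), ∀ j, ⟪ν, w j⟫ = ε j := by
  set Φ : EuclideanSpace ℝ (Fin n) →ₗ[ℝ] (Fin n → ℝ) :=
    { toFun := fun x => fun j => ⟪w j, x⟫
      map_add' := by intro x y; funext j; simp [inner_add_right]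
      map_smul' := by
        intro a x; funext j
        simp only [RingHom.id_apply, Pi.smul_apply, smul_eq_mul]
        exact real_inner_smul_right _ _ _ } with hΦ
  have hinj : Function.Injective Φ := by
    rw [injective_iff_map_eq_zero]
    intro x hx
    have hx' : ∀ j, ⟪w j, x⟫ = 0 := fun j => congrFun hx j
    have : ⟪x, x⟫ = 0 := by
      nth_rewrite 1 [← bw.sum_repr x]
      rw [sum_inner]
      apply Finset.sum_eq_zero
      intro i _
      rw [real_inner_smul_left, show bw i = w i from by rw [← hbw], hx' i, mul_zero]
    exact inner_self_eq_zero.1 this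
  have hsurj : Function.Surjective Φ := by
    rw [← LinearMap.injective_iff_surjective_of_finrank_eq_finrank (by simp)]
    exact hinj
  obtain ⟨ν, hν⟩ := hsurj ε
  exact ⟨ν, fun j => by
    rw [real_inner_comm]
    exact congrFun hν j⟩

lemma exists_linmap (u : Fin n → EuclideanSpace ℝ (Fin n)) (b : Fin n → ℝ)
    (hcomp : ∀ c : Fin n → ℝ, ∑ i, c i • u i = 0 → ∑ i, c i * b i = 0) :
    ∃ ℓ : EuclideanSpace ℝ (Fin n) →ₗ[ℝ] ℝ,
      ∀ c : Fin n → ℝ, ℓ (∑ i, c i • u i) = ∑ i, c i * b i := by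
  set U : (Fin n → ℝ) →ₗ[ℝ] EuclideanSpace ℝ (Fin n) :=
    { toFun := fun c => ∑ i, c i • u i
      map_add' := by intro x y; simp [add_smul, Finset.sum_add_distrib]
      map_smul' := by intro a x; simp [Finset.smul_sum, smul_smul] } with hU
  set B : (Fin n → ℝ) →ₗ[ℝ] ℝ :=
    { toFun := fun c => ∑ i, c i * b i
      map_add' := by intro x y; simp [add_mul, Finset.sum_add_distrib]
      map_smul' := by intro a x; simp [Finset.mul_sum, mul_assoc]  } with hB
  have hker : ∀ c, U c = 0 → B c = 0 := hcomp
  obtain ⟨g, hg⟩ := LinearMap.exists_rightInverse_of_surjective U.rangeRestrict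
    (LinearMap.range_eq_top.2 U.surjective_rangeRestrict)
  obtain ⟨ℓ, hℓ⟩ := LinearMap.exists_extend (B.comp g)
  refine ⟨ℓ, fun c => ?_⟩
  have hmem : U c ∈ LinearMap.range U := ⟨c, rfl⟩
  have h1 : ℓ (U c) = B (g ⟨U c, hmem⟩) := by
    have := congrFun (congrArg (DFunLike.coe) hℓ) ⟨U c, hmem⟩
    simpa using this
  have h2 : U (g ⟨U c, hmem⟩) = U c := by
    have := congrFun (congrArg (DFunLike.coe) hg) ⟨U c, hmem⟩
    have := congrArg Subtype.val this
    simpa [LinearMap.rangeRestrict] using this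
  have h3 : B (g ⟨U c, hmem⟩) = B c := by
    have hz : U (g ⟨U c, hmem⟩ - c) = 0 := by rw [map_sub, h2, sub_self]
    have := hker _ hz
    rw [map_sub] at this
    linarith [this]
  calc ℓ (∑ i, c i • u i) = ℓ (U c) := rfl
    _ = B c := by rw [h1, h3]
    _ = ∑ i, c i * b i := rfl

set_option maxHeartbeats 1000000 in
/-- For every `n ≥ 2`, every symmetric crosspolytope in `ℝⁿ`, i.e. `conv{±w₁, …, ±wₙ}`
for linearly independent `w₁, …, wₙ`, is SRS-indecomposable. -/
theorem crosspolytope_not_SRSDecomposable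
    {n : ℕ} (hn : 2 ≤ n)
    (w : Fin n → EuclideanSpace ℝ (Fin n)) (hw : LinearIndependent ℝ w)
    (K : Set (EuclideanSpace ℝ (Fin n)))
    (hK : K = convexHull ℝ (Set.range w ∪ -Set.range w)) :
    ¬ IsSRSDecomposable K := by
  rintro ⟨v, β, ε', hε', hv, hodd, hconv, hnl⟩
  apply hnl
  have hn0 : 0 < n := by omega
  haveI : Nonempty (Fin n) := ⟨⟨0, hn0⟩⟩
  have hcard : Fintype.card (Fin n) = Module.finrank ℝ (EuclideanSpace ℝ (Fin n)) := by simp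
  set bw := basisOfLinearIndependentOfCardEqFinrank hw hcard with hbwdef
  have hbw : ⇑bw = w := coe_basisOfLinearIndependentOfCardEqFinrank hw hcard
  have hKchar : K = {y : EuclideanSpace ℝ (Fin n) | ∑ i, |bw.repr y i| ≤ 1} := by
    rw [hK, crossK_char hn0 w bw hbw]
  set u : Fin n → EuclideanSpace ℝ (Fin n) := fun i => projPerp v (w i) with hu
  set b : Fin n → ℝ := fun i => β (u i) with hb
  have hwK : ∀ i, w i ∈ K := fun i => hK ▸ subset_convexHull _ _ (Or.inl ⟨i, rfl⟩)
  have h0K : (0 : EuclideanSpace ℝ (Fin n)) ∈ K := by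
    rw [hKchar]
    simp
  have hβ0 : β 0 = 0 := by
    have h := hodd 0 ⟨0, h0K, projPerp_zero v⟩
    rw [neg_zero] at h; linarith
  have hβneg : ∀ i, β (-(u i)) = -(b i) := fun i => hodd (u i) ⟨w i, hwK i, rfl⟩
  have hβvert : ∀ (ε : Fin n → ℝ), (∀ i, ε i = 1 ∨ ε i = -1) →
      ∀ i, β (projPerp v (ε i • w i)) = ε i * b i := by
    intro ε hεpm i
    rcases hεpm i with h | h <;> rw [h]
    · rw [one_smul, one_mul, hb]
    · have h1 : ((-1:ℝ)) • w i = -(w i) := by rw [neg_smul, one_smul]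
      rw [h1, projPerp_neg, hβneg i]
      ring
  -- Step 1: compatibility of `b` with linear dependences of `u`.
  have hcomp : ∀ c : Fin n → ℝ, ∑ i, c i • u i = 0 → ∑ i, c i * b i = 0 := by
    intro c hc
    by_cases hc0 : c = 0
    · subst hc0; simp
    set z := ∑ i, c i • w i with hz
    have hπz : projPerp v z = 0 := by
      rw [hz, projPerp_sum]
      exact hc
    set c' : ℝ := ⟪z, v⟫ / ⟪v, v⟫ with hc'
    have hzv : z = c' • v := by
      have h1 : z - c' • v = 0 := hπz
      linear_combination (norm := module) h1
    have hc'0 : c' ≠ 0 := by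
      intro h
      rw [h, zero_smul] at hzv
      have hzero := Fintype.linearIndependent_iff.1 hw c (by rw [← hz]; exact hzv)
      exact hc0 (funext hzero)
    set s : ℝ := ∑ i, |c i| with hs
    have hspos : 0 < s := by
      obtain ⟨i, hi⟩ : ∃ i, c i ≠ 0 := by
        by_contra h; push_neg at h; exact hc0 (funext h)
      calc (0:ℝ) < |c i| := abs_pos.2 hi
        _ ≤ ∑ j, |c j| := Finset.single_le_sum (f := fun j => |c j|)
              (fun j _ => abs_nonneg _) (Finset.mem_univ i)
        _ = s := hs.symm
    set ε : Fin n → ℝ := fun i => if c i < 0 then -1 else 1 with hεdef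
    have hεpm : ∀ i, ε i = 1 ∨ ε i = -1 := fun i => by
      rw [hεdef]; dsimp only; split_ifs <;> simp
    have hεc : ∀ i, ε i * c i = |c i| := by
      intro i; rw [hεdef]; dsimp only; split_ifs with h
      · rw [abs_of_neg h]; ring
      · rw [abs_of_nonneg (not_lt.1 h)]; ring
    obtain ⟨ν, hν⟩ := exists_nu w bw hbw ε
    have hνz : ⟪ν, z⟫ = s := by
      rw [hz, inner_sum, hs]
      apply Finset.sum_congr rfl
      intro i _
      rw [real_inner_smul_right, hν i, ← hεc i]
      ring
    have hνv : ⟪ν, v⟫ ≠ 0 := by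
      intro h
      rw [hzv, real_inner_smul_right, h, mul_zero] at hνz
      linarith
    have ht0 : ∀ i, 0 ≤ |c i| / s := fun i => div_nonneg (abs_nonneg _) hspos.le
    have ht1 : ∑ i, |c i| / s = 1 := by rw [← Finset.sum_div, ← hs, div_self hspos.ne']
    have hkey := key_rel w K hK v hv β ε' hε' hconv ε hεpm ν hν hνv
      (fun i => |c i| / s) ht0 ht1
    have hLHS : (∑ i, ((|c i| / s) * ε i) • w i) = (s⁻¹ * c') • v := by
      have h1 : ∀ i, ((|c i| / s) * ε i) • w i = s⁻¹ • (c i • w i) := by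
        intro i
        rw [smul_smul]
        congr 1
        have h3 : ε i * ε i = 1 := by
          rcases hεpm i with h | h <;> rw [h] <;> norm_num
        have habsc : |c i| * ε i = c i := by
          rw [← hεc i, mul_comm (ε i) (c i), mul_assoc, h3, mul_one]
        rw [div_mul_eq_mul_div, habsc, div_eq_inv_mul]
      rw [Finset.sum_congr rfl fun i _ => h1 i, ← Finset.smul_sum, ← hz, hzv, smul_smul]
    rw [hLHS, projPerp_smul_self v hv, hβ0] at hkey
    have hRHS : ∑ i, (|c i| / s) * β (projPerp v (ε i • w i)) = s⁻¹ * ∑ i, c i * b i := by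
      rw [Finset.mul_sum]
      apply Finset.sum_congr rfl
      intro i _
      rw [hβvert ε hεpm i]
      have h3 : ε i * ε i = 1 := by
        rcases hεpm i with h | h <;> rw [h] <;> norm_num
      have habsc : |c i| * ε i = c i := by
        rw [← hεc i, mul_comm (ε i) (c i), mul_assoc, h3, mul_one]
      calc |c i|/s * (ε i * b i) = (|c i| * ε i) * b i / s := by ring
        _ = c i * b i / s := by rw [habsc]
        _ = s⁻¹ * (c i * b i) := by rw [div_eq_inv_mul]
    rw [hRHS] at hkey
    have hs0 : (s:ℝ)⁻¹ ≠ 0 := inv_ne_zero hspos.ne'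
    rcases mul_eq_zero.1 hkey.symm with h | h
    · exact absurd h hs0
    · exact h
  -- Step 2: the linear functional.
  obtain ⟨ℓ, hℓ⟩ := exists_linmap u b hcomp
  refine ⟨ℓ, ?_⟩
  rintro x ⟨y, hyK, rfl⟩
  -- Step 3: covering by "upper" facets.
  set cv : Fin n → ℝ := fun i => bw.repr v i with hcvdef
  have hcv' : ∀ i, bw.repr v i = cv i := fun i => rfl
  obtain ⟨i0, hi0⟩ : ∃ i, cv i ≠ 0 := by
    by_contra h; push_neg at h
    apply hv
    have h1 : bw.repr v = 0 := by ext i; exact h i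
    exact (LinearEquiv.map_eq_zero_iff bw.repr).1 h1
  have hmemiff : ∀ (p : EuclideanSpace ℝ (Fin n)) (s : ℝ),
      p + s • v ∈ K ↔ ∑ i, |bw.repr p i + s * cv i| ≤ 1 := by
    intro p s
    rw [hKchar, Set.mem_setOf_eq]
    have h1 : ∀ i, bw.repr (p + s • v) i = bw.repr p i + s * cv i := by
      intro i
      rw [map_add, _root_.map_smul]
      simp [Finsupp.add_apply, Finsupp.smul_apply, hcv' i]
    rw [Finset.sum_congr rfl fun i _ => by rw [h1 i]]
  set A : Set ℝ := {s | ∑ i, |bw.repr y i + s * cv i| ≤ 1} with hA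
  have hAiff : ∀ s, s ∈ A ↔ y + s • v ∈ K := fun s => by
    rw [hmemiff y s]; rfl
  have hA0 : (0:ℝ) ∈ A := by
    rw [hAiff]
    simpa using hyK
  have hfcont : Continuous fun s : ℝ => ∑ i, |bw.repr y i + s * cv i| :=
    continuous_finset_sum _ fun i _ =>
      (continuous_const.add (continuous_id.mul continuous_const)).abs
  have hAclosed : IsClosed A := isClosed_Iic.preimage hfcont
  have hAbdd : Bornology.IsBounded A := by
    apply (Metric.isBounded_Icc (-((1 + |bw.repr y i0|)/|cv i0|))
      ((1 + |bw.repr y i0|)/|cv i0|)).subset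
    intro s hs
    simp only [hA, Set.mem_setOf_eq] at hs
    have h1 : |bw.repr y i0 + s * cv i0| ≤ 1 :=
      le_trans (Finset.single_le_sum (f := fun j => |bw.repr y j + s * cv j|)
        (fun j _ => abs_nonneg _) (Finset.mem_univ i0)) hs
    have h3 : s * cv i0 = (bw.repr y i0 + s * cv i0) + (-(bw.repr y i0)) := by ring
    have h2 : |s| * |cv i0| ≤ 1 + |bw.repr y i0| := by
      rw [← abs_mul, h3]
      calc |(bw.repr y i0 + s * cv i0) + (-(bw.repr y i0))|
          ≤ |bw.repr y i0 + s * cv i0| + |(-(bw.repr y i0))| := abs_add_le _ _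
        _ = |bw.repr y i0 + s * cv i0| + |bw.repr y i0| := by rw [abs_neg]
        _ ≤ 1 + |bw.repr y i0| := by linarith
    have hcv0 : 0 < |cv i0| := abs_pos.2 hi0
    have h4 : |s| ≤ (1 + |bw.repr y i0|)/|cv i0| := (le_div_iff₀ hcv0).2 h2
    exact abs_le.1 h4
  have hAcomp : IsCompact A := Metric.isCompact_of_isClosed_isBounded hAclosed hAbdd
  obtain ⟨sm, hsmA, hsmmax⟩ := hAcomp.exists_isMaxOn ⟨0, hA0⟩ continuousOn_id
  set m := y + sm • v with hm
  have hmK : m ∈ K := (hAiff sm).1 hsmA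
  have hπm : projPerp v m = projPerp v y := projPerp_add_smul v hv y sm
  have htop : ∀ s : ℝ, 0 < s → m + s • v ∉ K := by
    intro s hs hmem
    have h1 : m + s • v = y + (sm + s) • v := by rw [hm, add_smul]; abel
    have h2 : sm + s ∈ A := (hAiff _).2 (by rw [← h1]; exact hmem)
    have h3 : sm + s ≤ sm := hsmmax h2
    linarith
  set c : Fin n → ℝ := fun i => bw.repr m i with hcdef
  have hc' : ∀ i, bw.repr m i = c i := fun i => rfl
  have hmKc : ∑ i, |c i| ≤ 1 := by
    rw [hKchar] at hmK
    exact hmK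
  have hmsv : ∀ s, m + s • v ∈ K ↔ ∑ i, |c i + s * cv i| ≤ 1 := fun s => hmemiff m s
  have hc1 : ∑ i, |c i| = 1 := by
    by_contra h
    have hlt : ∑ i, |c i| < 1 := lt_of_le_of_ne hmKc h
    set V := ∑ i, |cv i| with hV
    have hVpos : 0 < V := by
      calc (0:ℝ) < |cv i0| := abs_pos.2 hi0
        _ ≤ ∑ j, |cv j| := Finset.single_le_sum (f := fun j => |cv j|)
              (fun j _ => abs_nonneg _) (Finset.mem_univ i0)
        _ = V := hV.symm
    set s := (1 - ∑ i, |c i|) / V with hsdef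
    have hspos : 0 < s := div_pos (by linarith) hVpos
    apply htop s hspos
    rw [hmsv]
    calc ∑ i, |c i + s * cv i| ≤ ∑ i, (|c i| + s * |cv i|) := by
          apply Finset.sum_le_sum
          intro i _
          calc |c i + s * cv i| ≤ |c i| + |s * cv i| := abs_add_le _ _
            _ = |c i| + s * |cv i| := by rw [abs_mul, abs_of_pos hspos]
      _ = (∑ i, |c i|) + s * V := by rw [Finset.sum_add_distrib, ← Finset.mul_sum]
      _ = 1 := by rw [hsdef]; field_simp; ring
  have hεexists : ∃ ε : Fin n → ℝ, (∀ i, ε i = 1 ∨ ε i = -1) ∧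
      (∀ i, ε i * c i = |c i|) ∧ (∑ i, ε i * cv i) ≠ 0 := by
    set ε0 : Fin n → ℝ := fun i => if c i < 0 then -1 else 1 with hε0
    have hε0pm : ∀ i, ε0 i = 1 ∨ ε0 i = -1 := fun i => by
      rw [hε0]; dsimp only; split_ifs <;> simp
    have hε0c : ∀ i, ε0 i * c i = |c i| := by
      intro i; rw [hε0]; dsimp only; split_ifs with h
      · rw [abs_of_neg h]; ring
      · rw [abs_of_nonneg (not_lt.1 h)]; ring
    by_cases hS : (∑ i, ε0 i * cv i) ≠ 0
    · exact ⟨ε0, hε0pm, hε0c, hS⟩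
    push_neg at hS
    by_cases hj : ∃ j, c j = 0 ∧ cv j ≠ 0
    · obtain ⟨j, hcj, hcvj⟩ := hj
      classical
      refine ⟨Function.update ε0 j (-(ε0 j)), ?_, ?_, ?_⟩
      · intro i
        by_cases h : i = j
        · subst h
          rw [Function.update_self]
          rcases hε0pm i with h | h <;> rw [h] <;> simp
        · rw [Function.update_of_ne h]; exact hε0pm i
      · intro i
        by_cases h : i = j
        · subst h
          rw [Function.update_self, hcj, mul_zero, abs_zero]
        · rw [Function.update_of_ne h]; exact hε0c i
      · have hterm : ∀ i, Function.update ε0 j (-(ε0 j)) i * cv i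
            = ε0 i * cv i - (if i = j then 2 * (ε0 j * cv j) else 0) := by
          intro i
          by_cases h : i = j
          · subst h; rw [Function.update_self, if_pos rfl]; ring
          · rw [Function.update_of_ne h, if_neg h]; ring
        have hε0j : ε0 j ≠ 0 := by
          rcases hε0pm j with h | h <;> rw [h] <;> norm_num
        rw [Finset.sum_congr rfl fun i _ => hterm i, Finset.sum_sub_distrib, hS,
          Finset.sum_ite_eq' Finset.univ j, if_pos (Finset.mem_univ j), zero_sub, neg_ne_zero]
        exact mul_ne_zero two_ne_zero (mul_ne_zero hε0j hcvj)
    · push_neg at hj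
      exfalso
      have hne : (Finset.univ : Finset (Fin n)).Nonempty := ⟨⟨0, hn0⟩, Finset.mem_univ _⟩
      set s := Finset.univ.inf' hne (fun i => if c i = 0 then 1 else |c i| / (|cv i| + 1))
        with hsdef
      have hspos : 0 < s := by
        rw [hsdef, Finset.lt_inf'_iff]
        intro i _
        split_ifs with h
        · norm_num
        · exact div_pos (abs_pos.2 h) (by positivity)
      apply htop s hspos
      rw [hmsv]
      have hterm : ∀ i, |c i + s * cv i| = ε0 i * c i + s * (ε0 i * cv i) := by
        intro i
        by_cases h : c i = 0
        · rw [h, hj i h]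
          simp
        · have hsle : s ≤ |c i| / (|cv i| + 1) := by
            calc s ≤ (if c i = 0 then 1 else |c i|/(|cv i|+1)) :=
                  Finset.inf'_le _ (Finset.mem_univ i)
              _ = |c i|/(|cv i|+1) := by rw [if_neg h]
          have hden : (0:ℝ) < |cv i| + 1 := by positivity
          have h2 : s * (|cv i| + 1) ≤ |c i| := by
            rw [← le_div_iff₀ hden]
            exact hsle
          have h1 : s * |cv i| < |c i| := by nlinarith
          have habs1 : |ε0 i| = 1 := by
            rcases hε0pm i with h' | h' <;> rw [h'] <;> norm_num
          have he2 : -(s * |cv i|) ≤ ε0 i * (s * cv i) := by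
            have hb1 : -|cv i| ≤ ε0 i * cv i := by
              rcases hε0pm i with h' | h' <;> rw [h']
              · simpa using neg_abs_le (cv i)
              · have := le_abs_self (cv i); nlinarith
            nlinarith
          have hnn : 0 ≤ ε0 i * (c i + s * cv i) := by
            have e1 : ε0 i * c i = |c i| := hε0c i
            nlinarith
          calc |c i + s * cv i| = |ε0 i| * |c i + s * cv i| := by rw [habs1, one_mul]
            _ = |ε0 i * (c i + s * cv i)| := (abs_mul _ _).symm
            _ = ε0 i * (c i + s * cv i) := abs_of_nonneg hnn
            _ = ε0 i * c i + s * (ε0 i * cv i) := by ring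
      rw [Finset.sum_congr rfl fun i _ => hterm i, Finset.sum_add_distrib, ← Finset.mul_sum]
      have h1 : ∑ i, ε0 i * c i = 1 := by
        rw [Finset.sum_congr rfl fun i _ => hε0c i]
        exact hc1
      rw [h1, hS, mul_zero, add_zero]
  obtain ⟨ε, hεpm, hεc, hεcv⟩ := hεexists
  obtain ⟨ν, hν⟩ := exists_nu w bw hbw ε
  have hνv : ⟪ν, v⟫ ≠ 0 := by
    have hvrep : v = ∑ i, cv i • w i := by
      have h1 := bw.sum_repr v
      rw [← h1]
      apply Finset.sum_congr rfl
      intro i _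
      rw [hcv' i, hbw]
    rw [hvrep, inner_sum]
    have h2 : ∀ i, ⟪ν, cv i • w i⟫ = ε i * cv i := by
      intro i; rw [real_inner_smul_right, hν i]; ring
    rw [Finset.sum_congr rfl fun i _ => h2 i]
    exact hεcv
  have hkey := key_rel w K hK v hv β ε' hε' hconv ε hεpm ν hν hνv
    (fun i => |c i|) (fun i => abs_nonneg _) hc1
  have hεsq : ∀ i, ε i * ε i = 1 := fun i => by
    rcases hεpm i with h | h <;> rw [h] <;> norm_num
  have habsc : ∀ i, |c i| * ε i = c i := by
    intro i
    rw [← hεc i, mul_comm (ε i) (c i), mul_assoc, hεsq i, mul_one]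
  have hmrep : m = ∑ i, c i • w i := by
    have h1 := bw.sum_repr m
    rw [← h1]
    apply Finset.sum_congr rfl
    intro i _
    rw [hc' i, hbw]
  have hLHSpt : ∑ i, (|c i| * ε i) • w i = m := by
    rw [hmrep]
    apply Finset.sum_congr rfl
    intro i _
    rw [habsc i]
  rw [hLHSpt, hπm] at hkey
  have hRHS : ∑ i, |c i| * β (projPerp v (ε i • w i)) = ∑ i, c i * b i := by
    apply Finset.sum_congr rfl
    intro i _
    rw [hβvert ε hεpm i, ← mul_assoc, habsc i]
  have hπy : projPerp v y = ∑ i, c i • u i := by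
    rw [← hπm, hmrep, projPerp_sum]
  calc β (projPerp v y) = ∑ i, c i * b i := by rw [hkey]; exact hRHS
    _ = ℓ (∑ i, c i • u i) := (hℓ c).symm
    _ = ℓ (projPerp v y) := by rw [← hπy]
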